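/- arXiv:2007.08966 — 2 statements merged into one kernel-verified Lean document; each statement's English description precedes it below -/
import Mathlib

section
/- Let g ≥ 1 and f(x) = x^{2g+1} + Σ_{k=0}^{2g−1} λ_{2(2g+1−k)} x^k. For 1 ≤ i < j ≤ g with j ≥ i+2, the polynomial r(2(g−j+1) x^{j−i−2} f(x) + x^{2g−i−j+1} ∂_x q(f(x), x^{2g−2j+2}), f'(x)) equals Σ_{k=0}^{2g−2j+2} (2g−2j+2−k) λ_{2(2g+1−k)} x^{k+j−i−2}, and in particular has degree ≤ 2g−3 in x. -/
/-!
With `m = 2g−2j+2`, write `f = r + x^m q` where `q = q(f, x^m)` and `r = f mod x^m` is the part of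
`f` below degree `m`. Differentiating and multiplying by `x` gives
`m f + x^{m+1} q' = x f' + (m r − x r')`, so after multiplying by `x^{j−i−2}` the polynomial in
question is `x^{j−i−1} f' + x^{j−i−2} (m r − x r')`. The coefficient of `x^k` in `m r − x r'` is
`(m−k) λ_{2(2g+1−k)}`, and the degree `2g−i−j` of the second summand is below `deg f' = 2g`, so it
is the remainder.
-/

open Polynomial

noncomputable section

/-- The base field `ℚ(λ_4, …, λ_{4g+2})`; the variable `X j` stands for `λ_{2j}`. -/
abbrev KF := FractionRing (MvPolynomial ℕ ℚ)

/-- `λ_{2j}` in `KF`, with `λ_0 = 1`, `λ_2 = 0` and `λ_s = 0` outside `{0,4,…,4g+2}`. -/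
def lamK (g j : ℕ) : KF :=
  if j = 0 then 1 else if 2 ≤ j ∧ j ≤ 2*g+1 then
    algebraMap (MvPolynomial ℕ ℚ) KF (MvPolynomial.X j) else 0

/-- `f(x) = x^{2g+1} + Σ_{k=0}^{2g−1} λ_{2(2g+1−k)} x^k`. -/
def fHyp (g : ℕ) : Polynomial KF :=
  X ^ (2*g+1) + ∑ k ∈ Finset.range (2*g), C (lamK g (2*g+1-k)) * X ^ k

open Finset

section General

variable {R : Type*} [CommRing R]

theorem degree_sum_range_C_mul_X_pow_lt (c : ℕ → R) (n : ℕ) :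
    degree (∑ k ∈ range n, C (c k) * X ^ k) < n := by
  simp_rw [← Fin.sum_univ_eq_sum_range (fun k => C (c k) * X ^ k), degree_sum_fin_lt]

theorem modByMonic_X_pow_eq_sum [Nontrivial R] (p : R[X]) (m : ℕ) :
    p %ₘ X ^ m = ∑ k ∈ range m, C (p.coeff k) * X ^ k := by
  have hdvd : X ^ m ∣ p - ∑ k ∈ range m, C (p.coeff k) * X ^ k :=
    X_pow_dvd_iff.2 fun d hd => by simp [hd]
  rw [modByMonic_eq_of_dvd_sub (monic_X_pow m) hdvd, (modByMonic_eq_self_iff (monic_X_pow m)).2]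
  rw [degree_X_pow]
  exact degree_sum_range_C_mul_X_pow_lt _ m

theorem C_mul_add_X_pow_succ_mul_derivative {p r q : R[X]} {m : ℕ} (h : r + X ^ m * q = p) :
    C (m : R) * p + X ^ (m + 1) * derivative q
      = X * derivative p + (C (m : R) * r - X * derivative r) := by
  subst h
  simp only [derivative_add, derivative_mul, derivative_X_pow]
  rcases m with _ | m
  · simp only [Nat.cast_zero, C_0]
    ring
  · simp only [Nat.add_sub_cancel, pow_succ]
    ring

theorem C_mul_sub_X_mul_derivative_sum (m : R) (c : ℕ → R) (n : ℕ) :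
    C m * ∑ k ∈ range n, C (c k) * X ^ k - X * derivative (∑ k ∈ range n, C (c k) * X ^ k)
      = ∑ k ∈ range n, C ((m - k) * c k) * X ^ k := by
  rw [derivative_sum, mul_sum, mul_sum, ← sum_sub_distrib]
  refine sum_congr rfl fun k _ => ?_
  rw [derivative_C_mul_X_pow]
  rcases k with _ | k
  · simp
  · simp only [Nat.add_sub_cancel, pow_succ, C_mul, C_sub]
    push_cast
    ring

end General

theorem coeff_fHyp {g k : ℕ} (hk : k < 2*g) : (fHyp g).coeff k = lamK g (2*g+1-k) := by
  simp [fHyp, coeff_X_pow, hk, (hk.trans (Nat.lt_succ_self _)).ne]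

theorem degree_derivative_fHyp (g : ℕ) : degree (derivative (fHyp g)) = (2*g : ℕ) := by
  have hlow := degree_sum_range_C_mul_X_pow_lt (fun k => lamK g (2*g+1-k)) (2*g)
  have hdeg : (fHyp g).natDegree = 2*g+1 := by
    rw [fHyp, natDegree_add_eq_left_of_degree_lt, natDegree_X_pow]
    exact hlow.trans (by rw [degree_X_pow]; exact_mod_cast Nat.lt_succ_self _)
  rw [degree_derivative (by omega), hdeg, Nat.add_sub_cancel]

def zijRemainder (g i j : ℕ) : KF[X] :=
  ∑ k ∈ range (2*g-2*j+3), C (((2*g-2*j+2-k : ℕ) : KF) * lamK g (2*g+1-k)) * X ^ (k+j-i-2)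

theorem zijRemainder_eq {g i j : ℕ} (hij : i + 2 ≤ j) (hj : j ≤ g) :
    zijRemainder g i j = X ^ (j-i-2) * ∑ k ∈ range (2*g-2*j+2),
      C ((((2*g-2*j+2 : ℕ) : KF) - k) * (fHyp g).coeff k) * X ^ k := by
  rw [zijRemainder, show 2*g-2*j+3 = 2*g-2*j+2+1 by omega, sum_range_succ, Nat.sub_self,
    Nat.cast_zero, zero_mul, C_0, zero_mul, add_zero, mul_sum]
  refine sum_congr rfl fun k hk => ?_
  rw [mem_range] at hk
  rw [Nat.cast_sub hk.le, coeff_fHyp (by omega), show k+j-i-2 = (j-i-2)+k by omega, pow_add]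
  ring

theorem degree_zijRemainder_le {g i j : ℕ} (hj : j ≤ g) :
    degree (zijRemainder g i j) ≤ (2*g-i-j : ℕ) := by
  refine (degree_sum_le _ _).trans (Finset.sup_le fun k hk => ?_)
  refine (degree_C_mul_X_pow_le _ _).trans ?_
  rw [mem_range] at hk
  exact_mod_cast (by omega : k+j-i-2 ≤ 2*g-i-j)

theorem C_mul_fHyp_add_X_pow_mul_derivative_divByMonic {g i j : ℕ} (hij : i + 2 ≤ j)
    (hj : j ≤ g) :
    C ((2*(g-j+1) : ℕ) : KF) * X ^ (j-i-2) * fHyp g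
        + X ^ (2*g+1-i-j) * derivative (fHyp g /ₘ X ^ (2*g-2*j+2))
      = X ^ (j-i-2+1) * derivative (fHyp g) + zijRemainder g i j := by
  have key := C_mul_add_X_pow_succ_mul_derivative (modByMonic_add_div (fHyp g) (X ^ (2*g-2*j+2)))
  rw [modByMonic_X_pow_eq_sum, C_mul_sub_X_mul_derivative_sum] at key
  rw [zijRemainder_eq hij hj, show 2*(g-j+1) = 2*g-2*j+2 by omega,
    show 2*g+1-i-j = (j-i-2) + (2*g-2*j+2+1) by omega, pow_add, pow_succ (X : KF[X]) (j-i-2)]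
  linear_combination X ^ (j-i-2) * key

/-- For `1 ≤ i`, `i + 2 ≤ j ≤ g`:
`r(2(g−j+1) x^{j−i−2} f(x) + x^{2g−i−j+1} ∂_x q(f(x), x^{2g−2j+2}), f'(x))
 = Σ_{k=0}^{2g−2j+2} (2g−2j+2−k) λ_{2(2g+1−k)} x^{k+j−i−2}`,
and in particular this remainder has degree ≤ 2g−3 in `x`. -/
theorem remainder_coefficient_zij (g i j : ℕ) (hi : 1 ≤ i) (hij : i + 2 ≤ j) (hj : j ≤ g) :
    (C ((2*(g-j+1) : ℕ) : KF) * X ^ (j-i-2) * fHyp g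
        + X ^ (2*g+1-i-j) * derivative (fHyp g /ₘ X ^ (2*g-2*j+2)))
      % derivative (fHyp g)
      = ∑ k ∈ Finset.range (2*g-2*j+3),
          C (((2*g-2*j+2-k : ℕ) : KF) * lamK g (2*g+1-k)) * X ^ (k+j-i-2) ∧
    ((C ((2*(g-j+1) : ℕ) : KF) * X ^ (j-i-2) * fHyp g
        + X ^ (2*g+1-i-j) * derivative (fHyp g /ₘ X ^ (2*g-2*j+2)))
      % derivative (fHyp g)).degree ≤ ((2*g-3 : ℕ) : WithBot ℕ) := by
  have hdeg : degree (zijRemainder g i j) ≤ (2*g-i-j : ℕ) := degree_zijRemainder_le hj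
  have hf' : derivative (fHyp g) ≠ 0 := fun h =>
    WithBot.bot_ne_coe (h ▸ degree_derivative_fHyp g : degree (0 : KF[X]) = _)
  have hlt : degree (zijRemainder g i j) < degree (derivative (fHyp g)) := by
    rw [degree_derivative_fHyp]
    exact hdeg.trans_lt (by exact_mod_cast (by omega : 2*g-i-j < 2*g))
  rw [C_mul_fHyp_add_X_pow_mul_derivative_divByMonic hij hj,
    mod_eq_of_dvd_sub (by rw [add_sub_cancel_right]; exact dvd_mul_left _ _),
    (mod_eq_self_iff hf').2 hlt]
  exact ⟨rfl, hdeg.trans (by exact_mod_cast (by omega : 2*g-i-j ≤ 2*g-3))⟩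

end
end

section
/- Let g ≥ 1, f(x) = x^{2g+1} + Σ_{k=0}^{2g−1} λ_{2(2g+1−k)} x^k, and for 1 ≤ i ≤ g let R_i(x) = x^{g−i+1} ∂_x q(f(x), x^{2g−2i+2}). Then for j = i+1 ≤ g: r(x^{g−i} R_{i+1}(x), f'(x)) = −((2i+1)/(2g+1)) Σ_{k=1}^{2g−1} k λ_{2(2g+1−k)} x^{k−1} + Σ_{k=2g−2i+1}^{2g−1} (k−2g+2i) λ_{2(2g+1−k)} x^{k−1}. -/
open Polynomial

noncomputable section

/-- `R_i(x) = x^{g−i+1} ∂_x q(f(x), x^{2g−2i+2})`. -/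
def RK (g i : ℕ) : Polynomial KF :=
  X ^ (g-i+1) * derivative (fHyp g /ₘ X ^ (2*g-2*i+2))

/-!
Put `m = 2g - 2i`. Dividing `f` by `x^m` just cuts off its `m` lowest terms, so
`q(f, x^m) = x^{2i+1} + Σ_{j<2i} λ_{2(2i+1-j)} x^j` and
`x^{g-i} R_{i+1} = x^m ∂_x q(f, x^m) = (2i+1) x^{2g} + S` with `deg S < 2g`.
Since `f' = (2g+1) x^{2g} + T` with `deg T < 2g`, a single division step leaves the remainder
`S - (2i+1)/(2g+1) T`.
-/

open Finset

namespace Polynomial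

section Semiring

variable {R : Type*} [Semiring R]

lemma degree_sum_C_mul_X_pow_lt {ι : Type*} {s : Finset ι} (c : ι → R) (e : ι → ℕ) {n : ℕ}
    (h : ∀ k ∈ s, e k < n) : (∑ k ∈ s, C (c k) * X ^ e k).degree < (n : WithBot ℕ) :=
  mem_degreeLT.1 <| Submodule.sum_mem _ fun k hk =>
    mem_degreeLT.2 <| (degree_C_mul_X_pow_le _ _).trans_lt (by exact_mod_cast h k hk)

lemma sum_range_add_C_mul_X_pow (c : ℕ → R) (m n : ℕ) :
    ∑ k ∈ range (m + n), C (c k) * X ^ k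
      = ∑ k ∈ range m, C (c k) * X ^ k + X ^ m * ∑ j ∈ range n, C (c (m + j)) * X ^ j := by
  rw [Finset.sum_range_add, mul_sum]
  congr 1
  refine sum_congr rfl fun j _ => ?_
  rw [pow_add, ← mul_assoc, ← mul_assoc, X_pow_mul]

lemma derivative_sum_C_mul_X_pow (c : ℕ → R) (n : ℕ) :
    derivative (∑ k ∈ range n, C (c k) * X ^ k) = ∑ k ∈ Ico 1 n, C (k * c k) * X ^ (k - 1) := by
  rw [derivative_sum]
  calc ∑ k ∈ range n, derivative (C (c k) * X ^ k)
      = ∑ k ∈ range n, C (k * c k) * X ^ (k - 1) :=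
        sum_congr rfl fun k _ => by rw [derivative_C_mul_X_pow, Nat.cast_comm]
    _ = ∑ k ∈ Ico 1 n, C (k * c k) * X ^ (k - 1) := by
        refine (sum_subset (fun k hk => mem_range.2 (mem_Ico.1 hk).2) fun k _ hk => ?_).symm
        obtain rfl : k = 0 := by simp only [mem_Ico, mem_range] at *; omega
        simp

end Semiring

lemma divByMonic_X_pow_mul_add {R : Type*} [Ring R] (q r : R[X]) {m : ℕ} (hr : r.degree < m) :
    (X ^ m * q + r) /ₘ X ^ m = q := by
  nontriviality R
  exact (div_modByMonic_unique q r (monic_X_pow m) ⟨add_comm _ _, by rwa [degree_X_pow]⟩).1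

section Field

variable {K : Type*} [Field K]

lemma C_mul_X_pow_add_mod {n : ℕ} {a c : K} (hc : c ≠ 0) {S T : K[X]}
    (hS : S.degree < n) (hT : T.degree < n) :
    (C a * X ^ n + S) % (C c * X ^ n + T) = S - C (a / c) * T := by
  have hdeg : (C c * X ^ n + T).degree = (n : WithBot ℕ) := by
    rw [degree_add_eq_left_of_degree_lt] <;> rw [degree_C_mul_X_pow n hc]
    exact hT
  have hT' : (C (a / c) * T).degree < (n : WithBot ℕ) := by
    rw [← smul_eq_C_mul]
    exact (degree_smul_le _ _).trans_lt hT
  have hrem : (S - C (a / c) * T).degree < (C c * X ^ n + T).degree :=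
    hdeg ▸ (degree_sub_le _ _).trans_lt (max_lt hS hT')
  rw [mod_eq_of_dvd_sub ⟨C (a / c), ?_⟩, (mod_eq_self_iff (ne_zero_of_degree_gt hrem)).2 hrem]
  rw [← mul_div_cancel₀ a hc, C_mul, mul_div_cancel₀ a hc]
  ring

end Field

end Polynomial

lemma fHyp_divByMonic_X_pow {g i : ℕ} (hig : i ≤ g) :
    fHyp g /ₘ X ^ (2*g - 2*i)
      = X ^ (2*i+1) + ∑ j ∈ range (2*i), C (lamK g (2*i+1-j)) * X ^ j := by
  set m := 2*g - 2*i
  have h2g : 2*g = m + 2*i := by omega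
  have hlam : ∀ j ∈ range (2*i),
      C (lamK g (2*g+1 - (m + j))) * X ^ j = C (lamK g (2*i+1-j)) * X ^ j :=
    fun j _ => by rw [show 2*g+1 - (m + j) = 2*i+1-j by omega]
  have hsplit : fHyp g = X ^ m * (X ^ (2*i+1) + ∑ j ∈ range (2*i),
      C (lamK g (2*i+1-j)) * X ^ j) + ∑ k ∈ range m, C (lamK g (2*g+1-k)) * X ^ k := by
    rw [fHyp, h2g, sum_range_add_C_mul_X_pow, ← h2g, sum_congr rfl hlam,
      show 2*g+1 = m + (2*i+1) by omega, pow_add]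
    ring
  rw [hsplit, divByMonic_X_pow_mul_add]
  exact degree_sum_C_mul_X_pow_lt _ _ fun k hk => mem_range.1 hk

lemma X_pow_mul_RK_succ {g i : ℕ} (hig : i + 1 ≤ g) :
    X ^ (g-i) * RK g (i+1)
      = C ((2*i+1 : ℕ) : KF) * X ^ (2*g)
        + ∑ k ∈ Icc (2*g-2*i+1) (2*g-1),
            C (((k+2*i-2*g : ℕ) : KF) * lamK g (2*g+1-k)) * X ^ (k-1) := by
  have hIcc : Icc (2*g-2*i+1) (2*g-1) = Ico (1 + (2*g-2*i)) (2*i + (2*g-2*i)) := by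
    ext k; simp only [mem_Icc, mem_Ico]; omega
  rw [RK, show g-(i+1)+1 = g-i by omega, show 2*g-2*(i+1)+2 = 2*g-2*i by omega,
    fHyp_divByMonic_X_pow (by omega), derivative_add, derivative_X_pow,
    derivative_sum_C_mul_X_pow, hIcc, ← sum_Ico_add', mul_add, mul_add, mul_sum, mul_sum]
  refine congrArg₂ (· + ·) ?_ ?_
  · rw [show 2*g = (g-i) + ((g-i) + (2*i+1-1)) by omega, pow_add, pow_add]
    ring
  · refine sum_congr rfl fun j hj => ?_
    obtain ⟨hj1, -⟩ := mem_Ico.1 hj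
    rw [show j + (2*g-2*i) + 2*i - 2*g = j by omega,
      show 2*g+1 - (j + (2*g-2*i)) = 2*i+1-j by omega,
      show j + (2*g-2*i) - 1 = (g-i) + ((g-i) + (j-1)) by omega, pow_add, pow_add]
    ring

lemma derivative_fHyp (g : ℕ) :
    derivative (fHyp g)
      = C ((2*g+1 : ℕ) : KF) * X ^ (2*g)
        + ∑ k ∈ Icc 1 (2*g-1), C ((k : KF) * lamK g (2*g+1-k)) * X ^ (k-1) := by
  rw [fHyp, derivative_add, derivative_X_pow, derivative_sum_C_mul_X_pow, Nat.add_sub_cancel,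
    show Icc 1 (2*g-1) = Ico 1 (2*g) by ext k; simp only [mem_Icc, mem_Ico]; omega]

theorem remainder_R_succ_general (g i : ℕ) (hig : i + 1 ≤ g) :
    (X ^ (g-i) * RK g (i+1)) % derivative (fHyp g)
      = C (-((2*(i : KF) + 1) / (2*(g : KF) + 1))) *
          (∑ k ∈ Finset.Icc 1 (2*g-1), C ((k : KF) * lamK g (2*g+1-k)) * X ^ (k-1))
        + ∑ k ∈ Finset.Icc (2*g-2*i+1) (2*g-1),
            C (((k+2*i-2*g : ℕ) : KF) * lamK g (2*g+1-k)) * X ^ (k-1) := by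
  have hc : ((2*g+1 : ℕ) : KF) ≠ 0 := Nat.cast_ne_zero.mpr (by omega)
  rw [X_pow_mul_RK_succ hig, derivative_fHyp,
    C_mul_X_pow_add_mod hc (degree_sum_C_mul_X_pow_lt _ _ fun k hk => by rw [mem_Icc] at hk; omega)
      (degree_sum_C_mul_X_pow_lt _ _ fun k hk => by rw [mem_Icc] at hk; omega)]
  push_cast
  rw [map_neg]
  ring

/-- For `1 ≤ i` and `i + 1 ≤ g`:
`r(x^{g−i} R_{i+1}(x), f'(x)) = −((2i+1)/(2g+1)) Σ_{k=1}^{2g−1} k λ_{2(2g+1−k)} x^{k−1}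
 + Σ_{k=2g−2i+1}^{2g−1} (k−2g+2i) λ_{2(2g+1−k)} x^{k−1}`. -/
theorem remainder_R_succ (g i : ℕ) (hi : 1 ≤ i) (hig : i + 1 ≤ g) :
    (X ^ (g-i) * RK g (i+1)) % derivative (fHyp g)
      = C (-((2*(i : KF) + 1) / (2*(g : KF) + 1))) *
          (∑ k ∈ Finset.Icc 1 (2*g-1), C ((k : KF) * lamK g (2*g+1-k)) * X ^ (k-1))
        + ∑ k ∈ Finset.Icc (2*g-2*i+1) (2*g-1),
            C (((k+2*i-2*g : ℕ) : KF) * lamK g (2*g+1-k)) * X ^ (k-1) :=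
  remainder_R_succ_general g i hig

end
end
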